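/- arXiv:1705.04064 — 4 statements merged into one kernel-verified Lean document; each statement's English description precedes it below -/
import Mathlib

section
/- The discriminant with respect to u of the cubic P(u,x) = 4x³u² + (−4x·2^{2/3}√3 + 4)u + 2x·2^{2/3}√3 + 3x·2^{2/3} − 4 (the y = 1 specialization of equation (17), divided by u) equals (2^{2/3}/3)(2√3 + 3)(6x + 3·2^{1/3} + √3·2^{1/3})(√3·2^{1/3} − 2^{1/3} − 2x)³, and its unique positive real root is x = 2^{−2/3}(√3 − 1). -/
/-- The discriminant (in `u`) of the quadratic
`P(u,x) = 4x³u² + (−4x·2^{2/3}√3 + 4)u + 2x·2^{2/3}√3 + 3x·2^{2/3} − 4`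
equals `(2^{2/3}/3)(2√3+3)(6x + 3·2^{1/3} + √3·2^{1/3})(√3·2^{1/3} − 2^{1/3} − 2x)³`,
and its unique positive real root is `x = 2^{−2/3}(√3 − 1)`. -/
theorem discriminant_y_one :
    (∀ x : ℝ,
      (-4 * x * (2 : ℝ) ^ ((2 : ℝ) / 3) * Real.sqrt 3 + 4) ^ 2
        - 4 * (4 * x ^ 3) *
          (2 * x * (2 : ℝ) ^ ((2 : ℝ) / 3) * Real.sqrt 3
            + 3 * x * (2 : ℝ) ^ ((2 : ℝ) / 3) - 4)
      = (2 : ℝ) ^ ((2 : ℝ) / 3) / 3 * (2 * Real.sqrt 3 + 3)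
        * (6 * x + 3 * (2 : ℝ) ^ ((1 : ℝ) / 3) + Real.sqrt 3 * (2 : ℝ) ^ ((1 : ℝ) / 3))
        * (Real.sqrt 3 * (2 : ℝ) ^ ((1 : ℝ) / 3) - (2 : ℝ) ^ ((1 : ℝ) / 3) - 2 * x) ^ 3) ∧
    (∀ x : ℝ, 0 < x →
      (((-4 * x * (2 : ℝ) ^ ((2 : ℝ) / 3) * Real.sqrt 3 + 4) ^ 2
        - 4 * (4 * x ^ 3) *
          (2 * x * (2 : ℝ) ^ ((2 : ℝ) / 3) * Real.sqrt 3
            + 3 * x * (2 : ℝ) ^ ((2 : ℝ) / 3) - 4) = 0)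
        ↔ x = (2 : ℝ) ^ (-(2 : ℝ) / 3) * (Real.sqrt 3 - 1))) := by
  set t : ℝ := (2 : ℝ) ^ ((1 : ℝ) / 3) with ht_def
  have ht_pos : 0 < t := Real.rpow_pos_of_pos (by norm_num) _
  have ht3 : t ^ 3 = 2 := by
    rw [ht_def, ← Real.rpow_natCast ((2:ℝ)^((1:ℝ)/3)) 3, ← Real.rpow_mul (by norm_num)]
    norm_num
  have h23 : (2 : ℝ) ^ ((2 : ℝ) / 3) = t ^ 2 := by
    rw [ht_def, ← Real.rpow_natCast ((2:ℝ)^((1:ℝ)/3)) 2, ← Real.rpow_mul (by norm_num)]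
    norm_num
  have hneg : (2 : ℝ) ^ (-(2 : ℝ) / 3) = t / 2 := by
    rw [ht_def, show -(2:ℝ)/3 = 1/3 + (-1) by norm_num,
      Real.rpow_add (by norm_num), Real.rpow_neg_one]
    ring
  set s : ℝ := Real.sqrt 3 with hs_def
  have hs : s ^ 2 = 3 := Real.sq_sqrt (by norm_num)
  have hs1 : 1 < s := by
    rw [hs_def, show (1:ℝ) = Real.sqrt 1 by simp]
    exact Real.sqrt_lt_sqrt (by norm_num) (by norm_num)
  have hs_pos : 0 < s := lt_trans one_pos hs1
  have key : ∀ x : ℝ,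
      (-4 * x * (2 : ℝ) ^ ((2 : ℝ) / 3) * s + 4) ^ 2
        - 4 * (4 * x ^ 3) *
          (2 * x * (2 : ℝ) ^ ((2 : ℝ) / 3) * s + 3 * x * (2 : ℝ) ^ ((2 : ℝ) / 3) - 4)
      = (2 : ℝ) ^ ((2 : ℝ) / 3) / 3 * (2 * s + 3)
        * (6 * x + 3 * t + s * t) * (s * t - t - 2 * x) ^ 3 := by
    intro x
    rw [h23]
    linear_combination
      (6 - 12*s + (4/3)*s^2 + 8*s^3 - 2*s^4 - (4/3)*s^5 + 3*t^3 - 6*t^3*s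
        + (2/3)*t^3*s^2 + 4*t^3*s^3 - t^3*s^4 - (2/3)*t^3*s^5 + 24*x*t^2
        - 32*x*t^2*s - 8*x*t^2*s^2 + 16*x*t^2*s^3 + 72*x^2*t - 48*x^2*t*s
        - 24*x^2*t*s^2 + 16*x^2*t*s^3 + 96*x^3 - (128/3)*x^3*s^2) * ht3
      + (-(28/3) + 8*s - 4*s^2 - (8/3)*s^3 - 16*x*t^2 + 32*x*t^2*s
        - 48*x^2*t + 32*x^2*t*s - (256/3)*x^3) * hs
  refine ⟨key, fun x hx => ?_⟩
  rw [key x, hneg]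
  constructor
  · intro h
    have hc : (0:ℝ) < (2 : ℝ) ^ ((2 : ℝ) / 3) / 3 * (2 * s + 3) := by
      rw [h23]; positivity
    have hf : (0:ℝ) < 6 * x + 3 * t + s * t := by positivity
    have hcube : (s * t - t - 2 * x) ^ 3 = 0 := by
      rcases mul_eq_zero.1 h with h' | h'
      · rcases mul_eq_zero.1 h' with h'' | h''
        · exact absurd h'' hc.ne'
        · exact absurd h'' hf.ne'
      · exact h'
    have : s * t - t - 2 * x = 0 := by
      exact pow_eq_zero_iff (by norm_num) |>.1 hcube
    linarith
  · intro h
    have : s * t - t - 2 * x = 0 := by rw [h]; ring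
    rw [this]
    ring
end

section
/- The polynomial Δ₁(x) = (27 − 15√3 − 54y)x³ − 9·2^{1/3}x² + 12√3·2^{2/3}x − 8 and the linear polynomial Δ₂(x) = (√3 + 2y − 1)x − 2^{1/3} have no common root for any y ∈ [0,1] \ {1/2}; equivalently the resultant of Δ₁ and Δ₂ in x vanishes only at y = 1/2 on [0,1]. -/
/-! A common root `x` of `Δ₁` and `Δ₂` makes their resultant vanish. Writing `a = 2^{1/3}`,
`s = √3` and `c = s + 2y - 1`, that resultant is
`(27 - 15s - 54y)a³ - 9a³c + 12s·a·2^{2/3}·c² - 8c³`, and with `a³ = 2`, `a·2^{2/3} = 2`,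
`s² = 3` it collapses to `-8(2y - 1)³`, which is nonzero for `y ≠ 1/2`. -/

theorem resultant_eq_zero_of_common_root {K : Type*} [CommRing K] {p q r d c a x : K}
    (hcubic : p * x ^ 3 - q * x ^ 2 + r * x - d = 0) (hlinear : c * x - a = 0) :
    p * a ^ 3 - q * a ^ 2 * c + r * a * c ^ 2 - d * c ^ 3 = 0 := by
  linear_combination c ^ 3 * hcubic
    - (p * (a ^ 2 + a * c * x + c ^ 2 * x ^ 2) - q * c * (a + c * x) + r * c ^ 2) * hlinear

theorem two_rpow_one_third_pow_three : ((2 : ℝ) ^ ((1 : ℝ) / 3)) ^ 3 = 2 := by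
  simpa [one_div] using Real.rpow_inv_natCast_pow (x := 2) (n := 3) (by norm_num) (by norm_num)

theorem two_rpow_one_third_mul_two_rpow_two_thirds :
    (2 : ℝ) ^ ((1 : ℝ) / 3) * (2 : ℝ) ^ ((2 : ℝ) / 3) = 2 := by
  rw [← Real.rpow_add two_pos]
  norm_num

theorem delta_resultant (y : ℝ) :
    (27 - 15 * √3 - 54 * y) * ((2 : ℝ) ^ ((1 : ℝ) / 3)) ^ 3
      - 9 * (2 : ℝ) ^ ((1 : ℝ) / 3) * ((2 : ℝ) ^ ((1 : ℝ) / 3)) ^ 2 * (√3 + 2 * y - 1)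
      + 12 * √3 * (2 : ℝ) ^ ((2 : ℝ) / 3) * (2 : ℝ) ^ ((1 : ℝ) / 3) * (√3 + 2 * y - 1) ^ 2
      - 8 * (√3 + 2 * y - 1) ^ 3
      = -8 * (2 * y - 1) ^ 3 := by
  have hs : √3 ^ 2 = 3 := Real.sq_sqrt (by norm_num)
  linear_combination (27 - 15 * √3 - 54 * y - 9 * (√3 + 2 * y - 1)) * two_rpow_one_third_pow_three
    + 12 * √3 * (√3 + 2 * y - 1) ^ 2 * two_rpow_one_third_mul_two_rpow_two_thirds
    + (16 * √3 + 48 * y - 24) * hs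

theorem delta_factors_no_common_root_general (y : ℝ)
    (hy : y ≠ 1 / 2) (x : ℂ) :
    ¬ ((((27 - 15 * Real.sqrt 3 - 54 * y : ℝ) : ℂ) * x ^ 3
          - ((9 * (2 : ℝ) ^ ((1 : ℝ) / 3) : ℝ) : ℂ) * x ^ 2
          + ((12 * Real.sqrt 3 * (2 : ℝ) ^ ((2 : ℝ) / 3) : ℝ) : ℂ) * x - 8 = 0)
        ∧ (((Real.sqrt 3 + 2 * y - 1 : ℝ) : ℂ) * x
            - (((2 : ℝ) ^ ((1 : ℝ) / 3) : ℝ) : ℂ) = 0)) := by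
  rintro ⟨hΔ₁, hΔ₂⟩
  have hres := resultant_eq_zero_of_common_root hΔ₁ hΔ₂
  norm_cast at hres
  rw [delta_resultant] at hres
  have : 2 * y - 1 = 0 := pow_eq_zero_iff three_ne_zero |>.mp (by linarith)
  exact hy (by linarith)

/-- For any `y ∈ [0,1]` with `y ≠ 1/2`, the polynomials
`Δ₁(x) = (27 − 15√3 − 54y)x³ − 9·2^{1/3}x² + 12√3·2^{2/3}x − 8` and
`Δ₂(x) = (√3 + 2y − 1)x − 2^{1/3}` have no common (complex) root. -/
theorem delta_factors_no_common_root (y : ℝ) (hy0 : 0 ≤ y) (hy1 : y ≤ 1)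
    (hy : y ≠ 1 / 2) (x : ℂ) :
    ¬ ((((27 - 15 * Real.sqrt 3 - 54 * y : ℝ) : ℂ) * x ^ 3
          - ((9 * (2 : ℝ) ^ ((1 : ℝ) / 3) : ℝ) : ℂ) * x ^ 2
          + ((12 * Real.sqrt 3 * (2 : ℝ) ^ ((2 : ℝ) / 3) : ℝ) : ℂ) * x - 8 = 0)
        ∧ (((Real.sqrt 3 + 2 * y - 1 : ℝ) : ℂ) * x
            - (((2 : ℝ) ^ ((1 : ℝ) / 3) : ℝ) : ℂ) = 0)) :=
  delta_factors_no_common_root_general y hy x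
end

section
/- For r ∈ (−1,1), define h_r(ℓ) = 4^{−ℓ}·C(2ℓ,ℓ)·Σ_{n=0}^{ℓ} [C(2n,n)·C(2ℓ−2n,ℓ−n)/C(2ℓ,ℓ)]·(−r)^n. Then h_r(ℓ) ~ 1/√(ℓπ(1+r)) as ℓ → ∞, uniformly for r in compact subsets of (−1,1). -/
/-!
Write `aₙ = C(2n,n)/4ⁿ`, so that `h_r(ℓ)·√(πℓ) = ∑_{n ≤ ℓ} aₙ (-r)ⁿ · a_{ℓ-n} √(πℓ)`.
The `n`-th Wallis partial product equals `1/(aₙ²(2n+1))`, is at least `π/4` and tends to `π/2`,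
hence `π m a_m² → 1` and `π (2m+1) a_m² ≤ 4`. So for fixed `n` the weight `a_{ℓ-n} √(πℓ)` tends
to `1`, and it never exceeds `2(n+1)`. As `|r| ≤ ρ < 1` on the compact `K`, Tannery's theorem
makes the sum converge, uniformly in `r`, to the binomial series `∑ aₙ (-r)ⁿ = (1+r)^{-1/2}`.
-/

open Filter Finset Topology

noncomputable def centralBinomRatio (n : ℕ) : ℝ := (n.centralBinom : ℝ) / 4 ^ n

lemma centralBinomRatio_nonneg (n : ℕ) : 0 ≤ centralBinomRatio n := by
  unfold centralBinomRatio
  positivity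

lemma centralBinomRatio_le_one (n : ℕ) : centralBinomRatio n ≤ 1 := by
  rw [centralBinomRatio, div_le_one (by positivity)]
  exact_mod_cast n.centralBinom_le_four_pow

lemma centralBinomRatio_succ (n : ℕ) :
    centralBinomRatio (n + 1) = centralBinomRatio n * ((2 * n + 1) / (2 * n + 2)) := by
  have h : ((n : ℝ) + 1) * (n + 1).centralBinom = 2 * (2 * n + 1) * n.centralBinom := by
    exact_mod_cast n.succ_mul_centralBinom_succ
  rw [centralBinomRatio, centralBinomRatio, pow_succ,
    eq_div_of_mul_eq (by positivity) ((mul_comm _ _).trans h)]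
  field_simp
  ring

lemma centralBinomRatio_eq_multichoose (n : ℕ) :
    centralBinomRatio n = Ring.multichoose (1 / 2 : ℝ) n := by
  have key : (n.factorial : ℝ) * centralBinomRatio n = (ascPochhammer ℝ n).eval (1 / 2) := by
    induction n with
    | zero => simp [centralBinomRatio]
    | succ n ih =>
      rw [ascPochhammer_succ_eval, ← ih, centralBinomRatio_succ, Nat.factorial_succ]
      push_cast
      field_simp
      ring
  rw [← Polynomial.ascPochhammer_smeval_eq_eval,
    ← Ring.factorial_nsmul_multichoose_eq_ascPochhammer, nsmul_eq_mul] at key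
  exact mul_left_cancel₀ (by positivity) key

theorem hasSum_centralBinomRatio_mul_pow {x : ℝ} (hx : |x| < 1) :
    HasSum (fun n => centralBinomRatio n * x ^ n) (Real.sqrt (1 - x))⁻¹ := by
  have h := (Real.one_div_one_sub_rpow_hasFPowerSeriesOnBall_zero (1 / 2)).hasSum
    (y := x) (by simpa [Metric.mem_eball, edist_dist, Real.dist_eq] using hx)
  simp only [FormalMultilinearSeries.ofScalars_apply_eq, zero_add, smul_eq_mul] at h
  rw [Real.sqrt_eq_rpow, ← one_div]
  simpa only [centralBinomRatio_eq_multichoose, Ring.multichoose_eq] using h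

lemma wallis_W_mul_centralBinomRatio_sq (n : ℕ) :
    Real.Wallis.W n * (centralBinomRatio n ^ 2 * (2 * n + 1)) = 1 := by
  induction n with
  | zero => simp [Real.Wallis.W, centralBinomRatio]
  | succ n ih =>
    refine Eq.trans ?_ ih
    rw [Real.Wallis.W_succ, centralBinomRatio_succ]
    push_cast
    field_simp
    ring

lemma pi_mul_centralBinomRatio_sq_mul_le (n : ℕ) :
    Real.pi * centralBinomRatio n ^ 2 * (2 * n + 1) ≤ 4 := by
  have hW : Real.pi / 4 ≤ Real.Wallis.W n := by
    refine le_trans ?_ (Real.Wallis.le_W n)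
    rw [div_mul_div_comm, div_le_div_iff₀ (by positivity) (by positivity)]
    nlinarith [Real.pi_pos]
  nlinarith [wallis_W_mul_centralBinomRatio_sq n, Real.pi_pos,
    sq_nonneg (centralBinomRatio n)]

lemma tendsto_pi_mul_natCast_mul_centralBinomRatio_sq :
    Tendsto (fun n : ℕ => Real.pi * n * centralBinomRatio n ^ 2) atTop (𝓝 1) := by
  have h := (Stirling.tendsto_self_div_two_mul_self_add_one.const_mul Real.pi).div
    Real.Wallis.tendsto_W_nhds_pi_div_two (by positivity)
  rw [show Real.pi * (1 / 2) / (Real.pi / 2) = 1 by field_simp] at h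
  refine h.congr fun n => ?_
  have hW0 := Real.Wallis.W_pos n
  simp only [Pi.div_apply]
  field_simp
  linear_combination (-(n : ℝ)) * wallis_W_mul_centralBinomRatio_sq n

lemma tendsto_pi_mul_add_mul_centralBinomRatio_sq (m : ℕ) :
    Tendsto (fun k : ℕ => Real.pi * (k + m) * centralBinomRatio k ^ 2) atTop (𝓝 1) := by
  have hsmall : Tendsto (fun k : ℕ => Real.pi * centralBinomRatio k ^ 2) atTop (𝓝 0) := by
    refine squeeze_zero (fun k => by positivity) (fun k => ?_)
      (tendsto_const_nhds.div_atTop (tendsto_atTop_add_const_right _ 1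
        (tendsto_natCast_atTop_atTop.const_mul_atTop two_pos)) : Tendsto
          (fun k : ℕ => (4 : ℝ) / (2 * k + 1)) atTop (𝓝 0))
    rw [le_div_iff₀ (by positivity)]
    exact pi_mul_centralBinomRatio_sq_mul_le k
  simpa only [mul_add, add_mul, mul_right_comm _ (m : ℝ), mul_comm (m : ℝ), zero_mul, add_zero]
    using tendsto_pi_mul_natCast_mul_centralBinomRatio_sq.add (hsmall.const_mul (m : ℝ))

noncomputable def convWeight (ℓ n : ℕ) : ℝ :=
  if n ≤ ℓ then centralBinomRatio (ℓ - n) * Real.sqrt (Real.pi * ℓ) else 0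

lemma convWeight_eq_sqrt {ℓ n : ℕ} (h : n ≤ ℓ) :
    convWeight ℓ n =
      Real.sqrt (Real.pi * ((ℓ - n : ℕ) + n) * centralBinomRatio (ℓ - n) ^ 2) := by
  rw [convWeight, if_pos h, Nat.cast_sub h, sub_add_cancel, Real.sqrt_mul' _ (sq_nonneg _),
    Real.sqrt_sq (centralBinomRatio_nonneg _), mul_comm]

lemma tendsto_convWeight (n : ℕ) : Tendsto (convWeight · n) atTop (𝓝 1) := by
  have h := ((tendsto_pi_mul_add_mul_centralBinomRatio_sq n).comp
    (tendsto_sub_atTop_nat n)).sqrt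
  rw [Real.sqrt_one] at h
  exact h.congr' ((eventually_ge_atTop n).mono fun ℓ hℓ => (convWeight_eq_sqrt hℓ).symm)

lemma abs_convWeight_le (ℓ n : ℕ) : |convWeight ℓ n| ≤ 2 * n + 2 := by
  unfold convWeight
  split_ifs with h
  · obtain ⟨k, rfl⟩ := Nat.exists_eq_add_of_le h
    rw [add_tsub_cancel_left]
    refine abs_le_of_sq_le_sq ?_ (by positivity)
    rw [mul_pow, Real.sq_sqrt (by positivity)]
    have hP : 0 ≤ Real.pi * centralBinomRatio k ^ 2 := by positivity
    push_cast
    calc centralBinomRatio k ^ 2 * (Real.pi * ((n : ℝ) + k))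
        ≤ Real.pi * centralBinomRatio k ^ 2 * (2 * k + 1) * (n + 1) := by
          nlinarith [mul_nonneg hP (by positivity : (0 : ℝ) ≤ 2 * k * n + k + 1)]
      _ ≤ 4 * ((n : ℝ) + 1) := by
          gcongr
          exact pi_mul_centralBinomRatio_sq_mul_le k
      _ ≤ (2 * (n : ℝ) + 2) ^ 2 := by nlinarith
  · rw [abs_zero]
    positivity

lemma abs_convWeight_sub_one_mul_pow_le {ρ : ℝ} (h0 : 0 ≤ ρ) (ℓ n : ℕ) :
    |convWeight ℓ n - 1| * ρ ^ n ≤ (2 * n + 3) * ρ ^ n := by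
  gcongr
  linarith [abs_sub (convWeight ℓ n) 1, abs_one (α := ℝ), abs_convWeight_le ℓ n]

lemma summable_two_mul_add_three_mul_pow {ρ : ℝ} (hρ : |ρ| < 1) :
    Summable fun n : ℕ => (2 * n + 3) * ρ ^ n := by
  have h1 := summable_pow_mul_geometric_of_norm_lt_one 1 (Real.norm_eq_abs ρ ▸ hρ)
  have h0 := summable_geometric_of_abs_lt_one hρ
  simpa [add_mul, mul_assoc] using (h1.mul_left 2).add (h0.mul_left 3)

lemma tendsto_tsum_abs_convWeight_sub_one_mul_pow {ρ : ℝ} (h0 : 0 ≤ ρ) (h1 : ρ < 1) :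
    Tendsto (fun ℓ => ∑' n, |convWeight ℓ n - 1| * ρ ^ n) atTop (𝓝 0) := by
  have hlim (n : ℕ) : Tendsto (fun ℓ => |convWeight ℓ n - 1| * ρ ^ n) atTop (𝓝 0) := by
    simpa using (((tendsto_convWeight n).sub_const 1).abs).mul_const (ρ ^ n)
  simpa using tendsto_tsum_of_dominated_convergence
    (summable_two_mul_add_three_mul_pow (abs_lt.2 ⟨by linarith, h1⟩)) hlim
    (Eventually.of_forall fun ℓ n => by
      rw [Real.norm_of_nonneg (by positivity)]
      exact abs_convWeight_sub_one_mul_pow_le h0 ℓ n)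

lemma hasSum_centralBinomRatio_mul_pow_mul_convWeight (ℓ : ℕ) (x : ℝ) :
    HasSum (fun n => centralBinomRatio n * x ^ n * convWeight ℓ n)
      ((∑ n ∈ range (ℓ + 1), centralBinomRatio n * centralBinomRatio (ℓ - n) * x ^ n) *
        Real.sqrt (Real.pi * ℓ)) := by
  have hsupp (n : ℕ) (hn : n ∉ range (ℓ + 1)) :
      centralBinomRatio n * x ^ n * convWeight ℓ n = 0 := by
    rw [convWeight, if_neg (by simpa [Nat.lt_succ_iff] using hn), mul_zero]
  have hterm (n : ℕ) (hn : n ∈ range (ℓ + 1)) :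
      centralBinomRatio n * centralBinomRatio (ℓ - n) * x ^ n * Real.sqrt (Real.pi * ℓ) =
        centralBinomRatio n * x ^ n * convWeight ℓ n := by
    rw [convWeight, if_pos (Nat.lt_succ_iff.1 (mem_range.1 hn))]
    ring
  rw [sum_mul, sum_congr rfl hterm]
  exact hasSum_sum_of_ne_finset_zero hsupp

lemma abs_sum_mul_sqrt_sub_le {ρ x : ℝ} (hρ : ρ < 1) (hx : |x| ≤ ρ) (ℓ : ℕ) :
    |(∑ n ∈ range (ℓ + 1), centralBinomRatio n * centralBinomRatio (ℓ - n) * x ^ n) *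
        Real.sqrt (Real.pi * ℓ) - (Real.sqrt (1 - x))⁻¹| ≤
      ∑' n, |convWeight ℓ n - 1| * ρ ^ n := by
  have h0 : 0 ≤ ρ := (abs_nonneg x).trans hx
  have hE : Summable fun n => |convWeight ℓ n - 1| * ρ ^ n :=
    (summable_two_mul_add_three_mul_pow (abs_lt.2 ⟨by linarith, hρ⟩)).of_nonneg_of_le
      (fun n => by positivity) (abs_convWeight_sub_one_mul_pow_le h0 ℓ)
  refine ((hasSum_centralBinomRatio_mul_pow_mul_convWeight ℓ x).sub
    (hasSum_centralBinomRatio_mul_pow (hx.trans_lt hρ))).norm_le_of_bounded hE.hasSum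
      fun n => ?_
  rw [Real.norm_eq_abs, ← mul_sub_one, abs_mul, abs_mul, abs_pow,
    abs_of_nonneg (centralBinomRatio_nonneg n), mul_comm]
  gcongr
  calc centralBinomRatio n * |x| ^ n ≤ 1 * ρ ^ n := by
        gcongr
        exact centralBinomRatio_le_one n
    _ = ρ ^ n := one_mul _

lemma abs_sum_mul_sqrt_sub_one_le {ρ r : ℝ} (hρ : ρ < 1) (hr : |r| ≤ ρ) (ℓ : ℕ) :
    |(∑ n ∈ range (ℓ + 1), centralBinomRatio n * centralBinomRatio (ℓ - n) * (-r) ^ n) *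
        Real.sqrt ((ℓ : ℝ) * Real.pi * (1 + r)) - 1| ≤
      2 * ∑' n, |convWeight ℓ n - 1| * ρ ^ n := by
  obtain ⟨hr₁, hr₂⟩ := abs_lt.1 (hr.trans_lt hρ)
  have hS := abs_sum_mul_sqrt_sub_le hρ ((abs_neg r).trans_le hr) ℓ
  rw [sub_neg_eq_add] at hS
  set S := ∑ n ∈ range (ℓ + 1), centralBinomRatio n * centralBinomRatio (ℓ - n) * (-r) ^ n
  have hpos : 0 < Real.sqrt (1 + r) := Real.sqrt_pos.2 (by linarith)
  have herr : S * Real.sqrt (Real.pi * ℓ) * Real.sqrt (1 + r) - 1 =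
      (S * Real.sqrt (Real.pi * ℓ) - (Real.sqrt (1 + r))⁻¹) * Real.sqrt (1 + r) := by
    rw [sub_mul, inv_mul_cancel₀ hpos.ne']
  rw [mul_comm (ℓ : ℝ), Real.sqrt_mul (by positivity), ← mul_assoc, herr, abs_mul,
    abs_of_pos hpos, mul_comm 2]
  exact mul_le_mul hS (Real.sqrt_le_iff.2 ⟨zero_le_two, by linarith⟩) hpos.le
    ((abs_nonneg _).trans hS)

lemma IsCompact.exists_abs_le_of_subset_Ioo {K : Set ℝ} (hK : IsCompact K)
    (hK' : K ⊆ Set.Ioo (-1) 1) : ∃ ρ, 0 ≤ ρ ∧ ρ < 1 ∧ ∀ r ∈ K, |r| ≤ ρ := by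
  obtain ⟨ρ, ⟨h0, h1⟩, hsub⟩ := exists_pos_lt_subset_ball one_pos hK.isClosed
    (by rwa [Real.ball_eq_Ioo, zero_sub, zero_add] : K ⊆ Metric.ball (0 : ℝ) 1)
  exact ⟨ρ, h0.le, h1, fun r hr => (mem_ball_zero_iff.1 (hsub hr)).le⟩

lemma four_pow_inv_mul_choose_mul_sum_eq (ℓ : ℕ) (x : ℝ) :
    ((4 : ℝ) ^ ℓ)⁻¹ * (Nat.choose (2 * ℓ) ℓ : ℝ) *
        (∑ n ∈ range (ℓ + 1),
          ((Nat.choose (2 * n) n : ℝ) * (Nat.choose (2 * ℓ - 2 * n) (ℓ - n) : ℝ)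
            / (Nat.choose (2 * ℓ) ℓ : ℝ)) * x ^ n) =
      ∑ n ∈ range (ℓ + 1), centralBinomRatio n * centralBinomRatio (ℓ - n) * x ^ n := by
  rw [mul_sum]
  refine sum_congr rfl fun n hn => ?_
  have hn : n ≤ ℓ := Nat.lt_succ_iff.1 (mem_range.1 hn)
  rw [← Nat.mul_sub, ← Nat.centralBinom_eq_two_mul_choose, ← Nat.centralBinom_eq_two_mul_choose,
    ← Nat.centralBinom_eq_two_mul_choose, centralBinomRatio, centralBinomRatio,
    ← Nat.add_sub_cancel' hn, pow_add, Nat.add_sub_cancel_left]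
  have := Nat.centralBinom_pos (n + (ℓ - n))
  field_simp

/-- Budd's asymptotic: for `r ∈ (−1,1)`,
`h_r(ℓ) = 4^{−ℓ} C(2ℓ,ℓ) Σ_{n=0}^{ℓ} [C(2n,n)C(2ℓ−2n,ℓ−n)/C(2ℓ,ℓ)] (−r)^n`
satisfies `h_r(ℓ) ~ 1/√(ℓπ(1+r))` as `ℓ → ∞`, uniformly for `r` in compact
subsets of `(−1,1)` (stated as uniform convergence of
`h_r(ℓ)·√(ℓπ(1+r))` to `1`). -/
theorem budd_asymptotic (K : Set ℝ) (hK : IsCompact K) (hK' : K ⊆ Set.Ioo (-1 : ℝ) 1) :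
    TendstoUniformlyOn
      (fun (ℓ : ℕ) (r : ℝ) =>
        ((4 : ℝ) ^ ℓ)⁻¹ * (Nat.choose (2 * ℓ) ℓ : ℝ) *
          (∑ n ∈ range (ℓ + 1),
            ((Nat.choose (2 * n) n : ℝ) * (Nat.choose (2 * ℓ - 2 * n) (ℓ - n) : ℝ)
              / (Nat.choose (2 * ℓ) ℓ : ℝ)) * (-r) ^ n) *
          Real.sqrt ((ℓ : ℝ) * Real.pi * (1 + r)))
      (fun _ => 1) atTop K := by
  obtain ⟨ρ, hρ0, hρ1, hKρ⟩ := hK.exists_abs_le_of_subset_Ioo hK'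
  rw [Metric.tendstoUniformlyOn_iff]
  intro ε hε
  filter_upwards [(tendsto_tsum_abs_convWeight_sub_one_mul_pow hρ0 hρ1).eventually
    (gt_mem_nhds (half_pos hε))] with ℓ hℓ r hr
  rw [four_pow_inv_mul_choose_mul_sum_eq, Real.dist_eq, abs_sub_comm]
  linarith [abs_sum_mul_sqrt_sub_one_le hρ1 (hKρ r hr) ℓ]
end

section
/- The value p̄_c = (2√3 − 1)/11 is the unique p ∈ (0,1) for which the growth constant formula r̄(p) = 2^{2/3}(1−p)/(1 + (2√3+5)p), valid for p ∈ [0, p̄_c], satisfies the quadratic equation 3p(23(1−p)² − (6√3+27)p + 9 + 48√3)·r̄(p)² + 3·2^{2/3}(4√3−5)p(1−p)(3p + 2√3)·r̄(p) − 2·2^{1/3}(1−p)³(2√3+9) = 0; i.e., the two branch formulas for r̄ agree exactly at p = p̄_c. -/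
open Set

/-- The value `p̄_c = (2√3 − 1)/11` is the unique `p ∈ (0,1)` for which the
subcritical branch formula `r̄(p) = 2^{2/3}(1−p)/(1 + (2√3+5)p)` satisfies the
supercritical-branch quadratic equation. -/
theorem bond_threshold_unique (p : ℝ) (hp : p ∈ Ioo (0 : ℝ) 1) :
    (3 * p * (23 * (1 - p) ^ 2 - (6 * Real.sqrt 3 + 27) * p + 9 + 48 * Real.sqrt 3)
        * ((2 : ℝ) ^ ((2 : ℝ) / 3) * (1 - p) / (1 + (2 * Real.sqrt 3 + 5) * p)) ^ 2
      + 3 * (2 : ℝ) ^ ((2 : ℝ) / 3) * (4 * Real.sqrt 3 - 5) * p * (1 - p)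
        * (3 * p + 2 * Real.sqrt 3)
        * ((2 : ℝ) ^ ((2 : ℝ) / 3) * (1 - p) / (1 + (2 * Real.sqrt 3 + 5) * p))
      - 2 * (2 : ℝ) ^ ((1 : ℝ) / 3) * (1 - p) ^ 3 * (2 * Real.sqrt 3 + 9) = 0)
    ↔ p = (2 * Real.sqrt 3 - 1) / 11 := by
  obtain ⟨hp0, hp1⟩ := hp
  set s : ℝ := Real.sqrt 3 with hsdef
  have hs : s ^ 2 = 3 := Real.sq_sqrt (by norm_num)
  have hs_pos : (0:ℝ) < s := Real.sqrt_pos.mpr (by norm_num)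
  set A : ℝ := (2 : ℝ) ^ ((1 : ℝ) / 3) with hAdef
  have hApos : 0 < A := Real.rpow_pos_of_pos (by norm_num) _
  have hA3 : A ^ 3 = 2 := by
    rw [hAdef, ← Real.rpow_natCast ((2:ℝ) ^ ((1:ℝ)/3)) 3, ← Real.rpow_mul (by norm_num)]
    norm_num
  have hA2 : (2 : ℝ) ^ ((2 : ℝ) / 3) = A ^ 2 := by
    rw [hAdef, ← Real.rpow_natCast ((2:ℝ) ^ ((1:ℝ)/3)) 2, ← Real.rpow_mul (by norm_num)]
    norm_num
  have hd : (0:ℝ) < 1 + (2 * s + 5) * p := by nlinarith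
  have hd' : (1 + (2 * s + 5) * p) ≠ 0 := ne_of_gt hd
  have hr : (A ^ 2 * (1 - p) / (1 + (2 * s + 5) * p)) * (1 + (2 * s + 5) * p)
      = A ^ 2 * (1 - p) := div_mul_cancel₀ _ hd'
  rw [hA2]
  have key :
      (3 * p * (23 * (1 - p) ^ 2 - (6 * s + 27) * p + 9 + 48 * s)
          * (A ^ 2 * (1 - p) / (1 + (2 * s + 5) * p)) ^ 2
        + 3 * A ^ 2 * (4 * s - 5) * p * (1 - p) * (3 * p + 2 * s)
          * (A ^ 2 * (1 - p) / (1 + (2 * s + 5) * p))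
        - 2 * A * (1 - p) ^ 3 * (2 * s + 9))
        * (1331 * (1 + (2 * s + 5) * p) ^ 2)
      = A * (1026 + 688 * s) * (1 - p) ^ 2 * (11 * p - 2 * s + 1) ^ 3 := by
    linear_combination
      (1331 * (3 * p * (23 * (1 - p) ^ 2 - (6 * s + 27) * p + 9 + 48 * s)
          * ((A ^ 2 * (1 - p) / (1 + (2 * s + 5) * p)) * (1 + (2 * s + 5) * p)
              + A ^ 2 * (1 - p))
        + 3 * A ^ 2 * (4 * s - 5) * p * (1 - p) * (3 * p + 2 * s)
          * (1 + (2 * s + 5) * p))) * hr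
      + ((8328:ℝ)*A + (-48:ℝ)*s*A + (5504:ℝ)*s^2*A + (-18680:ℝ)*p*A
        + (-90720:ℝ)*p*s*A + (-11008:ℝ)*p*s^2*A + (490568:ℝ)*p^2*A
        + (288064:ℝ)*p^2*s*A + (5504:ℝ)*p^2*s^2*A + (-564432:ℝ)*p^3*A
        + (-282480:ℝ)*p^3*s*A + (-309760:ℝ)*p^4*A + (63888:ℝ)*p^4*s*A
        + (393976:ℝ)*p^5*A + (21296:ℝ)*p^5*s*A) * hs
      + ((127776:ℝ)*p*A + (151734:ℝ)*p*s*A + (31944:ℝ)*p*s^2*A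
        + (-606936:ℝ)*p^2*A + (-479160:ℝ)*p^2*s*A + (15972:ℝ)*p^2*s^2*A
        + (63888:ℝ)*p^2*s^3*A + (622908:ℝ)*p^3*A + (622908:ℝ)*p^3*s*A
        + (-31944:ℝ)*p^3*s^2*A + (-127776:ℝ)*p^3*s^3*A + (63888:ℝ)*p^4*A
        + (-415272:ℝ)*p^4*s*A + (-111804:ℝ)*p^4*s^2*A + (63888:ℝ)*p^4*s^3*A
        + (-207636:ℝ)*p^5*A + (119790:ℝ)*p^5*s*A + (95832:ℝ)*p^5*s^2*A) * hA3
  constructor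
  · intro h
    have h2 : A * (1026 + 688 * s) * (1 - p) ^ 2 * (11 * p - 2 * s + 1) ^ 3 = 0 := by
      rw [← key, h]; ring
    have hpos : 0 < A * (1026 + 688 * s) * (1 - p) ^ 2 :=
      mul_pos (mul_pos hApos (by nlinarith)) (pow_pos (by linarith) 2)
    have h3 : (11 * p - 2 * s + 1) ^ 3 = 0 :=
      (mul_eq_zero.mp h2).resolve_left (ne_of_gt hpos)
    have h4 : 11 * p - 2 * s + 1 = 0 := by
      exact pow_eq_zero_iff (by norm_num) |>.mp h3
    field_simp
    linarith
  · intro h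
    have h4 : 11 * p - 2 * s + 1 = 0 := by rw [h]; ring
    have h5 := key
    rw [h4] at h5
    have h6 : (3 * p * (23 * (1 - p) ^ 2 - (6 * s + 27) * p + 9 + 48 * s)
          * (A ^ 2 * (1 - p) / (1 + (2 * s + 5) * p)) ^ 2
        + 3 * A ^ 2 * (4 * s - 5) * p * (1 - p) * (3 * p + 2 * s)
          * (A ^ 2 * (1 - p) / (1 + (2 * s + 5) * p))
        - 2 * A * (1 - p) ^ 3 * (2 * s + 9))
        * (1331 * (1 + (2 * s + 5) * p) ^ 2) = 0 := by rw [h5]; ring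
    exact (mul_eq_zero.mp h6).resolve_right
      (mul_ne_zero (by norm_num) (pow_ne_zero 2 hd'))
end
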